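/- Let n and k be integers with n ≥ 3 and ⌈n/3⌉ < k < n, and let C_n denote the cycle on n vertices. Then the k-dominating graph D_k(C_n) is Eulerian if and only if either n = 7 and k = 4, or n = 3 and k = 2. -/

import Mathlib

open SimpleGraph

/-- `D` is a dominating set of `G`: every vertex not in `D` has a neighbour in `D`. -/
def IsDomSet {V : Type*} (G : SimpleGraph V) (D : Set V) : Prop :=
  ∀ v ∉ D, ∃ u ∈ D, G.Adj u v

/-- The dominating graph of `G`: vertices are dominating sets of `G`, two dominating
sets are adjacent iff their symmetric difference has exactly one element. -/
def DomGraph {V : Type*} (G : SimpleGraph V) :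
    SimpleGraph {D : Set V // IsDomSet G D} where
  Adj A B := (symmDiff A.1 B.1).ncard = 1
  symm := ⟨fun A B h => by
    have h' : (symmDiff A.1 B.1).ncard = 1 := h
    show (symmDiff B.1 A.1).ncard = 1
    rwa [symmDiff_comm]⟩
  loopless := ⟨fun A h => by
    have h' : (symmDiff A.1 A.1).ncard = 1 := h
    simp [symmDiff_self, Set.bot_eq_empty] at h'⟩

/-- The `k`-dominating graph of `G`: vertices are dominating sets of `G` of cardinality
at most `k`, two such sets are adjacent iff their symmetric difference has exactly one
element. -/
def KDomGraph {V : Type*} (G : SimpleGraph V) (k : ℕ) :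
    SimpleGraph {D : Set V // IsDomSet G D ∧ D.ncard ≤ k} where
  Adj A B := (symmDiff A.1 B.1).ncard = 1
  symm := ⟨fun A B h => by
    have h' : (symmDiff A.1 B.1).ncard = 1 := h
    show (symmDiff B.1 A.1).ncard = 1
    rwa [symmDiff_comm]⟩
  loopless := ⟨fun A h => by
    have h' : (symmDiff A.1 A.1).ncard = 1 := h
    simp [symmDiff_self, Set.bot_eq_empty] at h'⟩

/-- A graph is Eulerian iff every vertex has even degree and any two edges lie in the
same connected component (i.e. at most one component contains an edge). -/
def IsEulerian {W : Type*} (H : SimpleGraph W) : Prop :=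
  (∀ v : W, Even (H.neighborSet v).ncard) ∧
  ∀ u v x y : W, H.Adj u v → H.Adj x y → H.Reachable u x

/-! The degree of a dominating set `D` in `D_k(G)` is the number of its removable vertices `x`
(those with `D \ {x}` still dominating), plus `|V| - |D|` when `|D| < k`. In `C_n` take
`S_a = {0, 2, …, 2a} ∪ {2a + 3, 2a + 6, …}`: when `n - 2a ≢ 1 (mod 3)` its cyclic gaps are all `2`
or `3`, so it is an independent dominating set and, for `|S_a| < k`, has degree `n - |S_a|`.
Adding the vertex `2a + 4` gives a dominating set whose only removable vertex is `2a + 4`, hence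
of degree `1` when its size is `k`. Choosing `a` according to `n mod 3` produces a vertex of odd
degree for every admissible `k` as soon as `n ∉ {3, 4, 7}`; those three cycles are settled by
computation, connectivity of `D_2(C_3)` and `D_4(C_7)` being witnessed by a walk through all of
their vertices. -/

open scoped Finset

lemma List.IsChain.reachable {W : Type*} {H : SimpleGraph W} {L : List W}
    (hL : L.IsChain H.Adj) {a b : W} (ha : a ∈ L) (hb : b ∈ L) : H.Reachable a b := by
  classical
  have hne : L ≠ [] := List.ne_nil_of_mem ha
  have hhead (c : W) (hc : c ∈ L) : H.Reachable (L.head hne) c :=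
    ((Walk.ofSupport L hne hL).takeUntil c (by rwa [Walk.support_ofSupport])).reachable
  exact (hhead a ha).symm.trans (hhead b hb)

section KDomGraph

variable {V : Type*}

def removableVertices (G : SimpleGraph V) (D : Set V) : Set V :=
  {x | x ∈ D ∧ IsDomSet G (D \ {x})}

variable {G : SimpleGraph V} {k : ℕ}

lemma IsDomSet.mono {D E : Set V} (hDE : D ⊆ E) (hD : IsDomSet G D) : IsDomSet G E :=
  fun v hv ↦
    let ⟨u, hu, huv⟩ := hD v (fun hvD ↦ hv (hDE hvD))
    ⟨u, hDE hu, huv⟩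

lemma not_isDomSet_diff_singleton {D : Set V} {x w : V} (hw : w ∉ D \ {x})
    (hpriv : ∀ u ∈ D, G.Adj u w → u = x) : ¬ IsDomSet G (D \ {x}) := fun h ↦
  let ⟨u, ⟨huD, hux⟩, huw⟩ := h w hw
  hux (hpriv u huD huw)

lemma Set.symmDiff_singleton_of_mem {D : Set V} {x : V} (hx : x ∈ D) :
    symmDiff D {x} = D \ {x} := by
  ext y
  by_cases hy : y = x
  · subst hy; simp [Set.mem_symmDiff, hx]
  · simp [Set.mem_symmDiff, hy]

lemma Set.symmDiff_singleton_of_notMem {D : Set V} {x : V} (hx : x ∉ D) :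
    symmDiff D {x} = insert x D := by
  ext y
  by_cases hy : y = x
  · subst hy; simp [Set.mem_symmDiff, hx]
  · simp [Set.mem_symmDiff, hy]

lemma ncard_neighborSet_kDomGraph {D : Set V} (hD : IsDomSet G D ∧ D.ncard ≤ k) :
    ((KDomGraph G k).neighborSet ⟨D, hD⟩).ncard =
      {x | IsDomSet G (symmDiff D {x}) ∧ (symmDiff D {x}).ncard ≤ k}.ncard := by
  have hinj : Set.InjOn (fun x ↦ symmDiff D {x}) Set.univ := fun x _ y _ hxy ↦ by
    simpa using congrArg (symmDiff D) hxy
  rw [← Set.ncard_image_of_injective _ Subtype.val_injective,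
    ← (hinj.mono (Set.subset_univ _)).ncard_image]
  congr 1
  ext E
  constructor
  · rintro ⟨⟨E, hE⟩, hadj, rfl⟩
    obtain ⟨x, hx⟩ := Set.ncard_eq_one.mp (show (symmDiff D E).ncard = 1 from hadj)
    have hEx : symmDiff D {x} = E := by rw [← hx, symmDiff_symmDiff_cancel_left]
    exact ⟨x, by rw [Set.mem_ofPred_eq, hEx]; exact hE, hEx⟩
  · rintro ⟨x, hx, rfl⟩
    refine ⟨⟨_, hx⟩, ?_, rfl⟩
    show (symmDiff D (symmDiff D {x})).ncard = 1
    rw [symmDiff_symmDiff_cancel_left, Set.ncard_singleton]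

lemma ncard_neighborSet_kDomGraph_of_isIndepSet [Finite V] {D : Set V} (hD : IsDomSet G D)
    (hind : G.IsIndepSet D) (hlt : D.ncard < k) :
    ((KDomGraph G k).neighborSet ⟨D, hD, hlt.le⟩).ncard = Dᶜ.ncard := by
  rw [ncard_neighborSet_kDomGraph]
  congr 1
  ext x
  by_cases hx : x ∈ D
  · simp only [Set.symmDiff_singleton_of_mem hx, Set.mem_ofPred_eq, Set.mem_compl_iff, hx,
      not_true_eq_false, iff_false, not_and]
    refine fun h _ ↦ not_isDomSet_diff_singleton (w := x) (by simp) (fun u hu hux ↦ ?_) h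
    by_contra hne
    exact hind hu hx hne hux
  · simp only [Set.symmDiff_singleton_of_notMem hx, Set.mem_ofPred_eq, Set.mem_compl_iff, hx,
      not_false_eq_true, iff_true, Set.ncard_insert_of_notMem hx]
    exact ⟨hD.mono (Set.subset_insert x D), hlt⟩

lemma ncard_neighborSet_kDomGraph_of_ncard_eq [Finite V] {D : Set V} (hD : IsDomSet G D)
    (heq : D.ncard = k) :
    ((KDomGraph G k).neighborSet ⟨D, hD, heq.le⟩).ncard = (removableVertices G D).ncard := by
  rw [ncard_neighborSet_kDomGraph]
  congr 1
  ext x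
  by_cases hx : x ∈ D
  · simp only [Set.symmDiff_singleton_of_mem hx, removableVertices, Set.mem_ofPred_eq, hx,
      true_and, and_iff_left_iff_imp]
    exact fun _ ↦ (Set.ncard_sdiff_singleton_le D x).trans heq.le
  · simp only [Set.symmDiff_singleton_of_notMem hx, removableVertices, Set.mem_ofPred_eq, hx,
      false_and, iff_false, not_and, Set.ncard_insert_of_notMem hx (Set.toFinite D)]
    omega

lemma not_isEulerian_kDomGraph_of_isIndepSet [Finite V] {D : Set V} (hD : IsDomSet G D)
    (hind : G.IsIndepSet D) (hlt : D.ncard < k) (hodd : Odd (Nat.card V - D.ncard)) :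
    ¬ IsEulerian (KDomGraph G k) := fun h ↦ by
  have := h.1 ⟨D, hD, hlt.le⟩
  rw [ncard_neighborSet_kDomGraph_of_isIndepSet hD hind hlt, Set.ncard_compl] at this
  exact Nat.not_even_iff_odd.2 hodd this

lemma not_isEulerian_kDomGraph_of_removableVertices_eq_singleton [Finite V] {D : Set V}
    (hD : IsDomSet G D) (heq : D.ncard = k) {y : V} (hrem : removableVertices G D = {y}) :
    ¬ IsEulerian (KDomGraph G k) := fun h ↦ by
  have := h.1 ⟨D, hD, heq.le⟩
  rw [ncard_neighborSet_kDomGraph_of_ncard_eq hD heq, hrem, Set.ncard_singleton] at this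
  exact Nat.not_even_one this

lemma kDomGraph_adj_coe [DecidableEq V] {s t : Finset V}
    (hs : IsDomSet G ↑s ∧ (↑s : Set V).ncard ≤ k) (ht : IsDomSet G ↑t ∧ (↑t : Set V).ncard ≤ k) :
    (KDomGraph G k).Adj ⟨↑s, hs⟩ ⟨↑t, ht⟩ ↔ #(symmDiff s t) = 1 := by
  show (symmDiff (↑s : Set V) ↑t).ncard = 1 ↔ _
  rw [← Finset.coe_symmDiff, Set.ncard_coe_finset]

variable [Fintype V] [DecidableEq V] [DecidableRel G.Adj]

instance (s : Finset V) : Decidable (IsDomSet G ↑s) :=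
  decidable_of_iff (∀ v ∉ s, ∃ u ∈ s, G.Adj u v) (by simp [IsDomSet])

lemma ncard_neighborSet_kDomGraph_coe (s : Finset V)
    (hs : IsDomSet G ↑s ∧ (↑s : Set V).ncard ≤ k) :
    ((KDomGraph G k).neighborSet ⟨↑s, hs⟩).ncard =
      #{x | IsDomSet G ↑(symmDiff s {x}) ∧ #(symmDiff s {x}) ≤ k} := by
  rw [ncard_neighborSet_kDomGraph, ← Set.ncard_coe_finset, Finset.coe_filter]
  simp only [Finset.mem_univ, true_and, ← Finset.coe_singleton, ← Finset.coe_symmDiff,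
    Set.ncard_coe_finset]

lemma not_isEulerian_kDomGraph_of_odd (s : Finset V) (hs : IsDomSet G ↑s) (hk : #s ≤ k)
    (hodd : ¬ Even #{x | IsDomSet G ↑(symmDiff s {x}) ∧ #(symmDiff s {x}) ≤ k}) :
    ¬ IsEulerian (KDomGraph G k) := fun h ↦ by
  have := h.1 ⟨↑s, hs, by rwa [Set.ncard_coe_finset]⟩
  rw [ncard_neighborSet_kDomGraph_coe] at this
  exact hodd this

lemma isEulerian_kDomGraph_of_isChain
    (heven : ∀ s : Finset V, IsDomSet G ↑s → #s ≤ k →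
      Even #{x | IsDomSet G ↑(symmDiff s {x}) ∧ #(symmDiff s {x}) ≤ k})
    (L : List (Finset V)) (hchain : L.IsChain fun s t ↦ #(symmDiff s t) = 1)
    (hL : ∀ s : Finset V, IsDomSet G ↑s ∧ #s ≤ k ↔ s ∈ L) :
    IsEulerian (KDomGraph G k) := by
  have hvert (D : {D : Set V // IsDomSet G D ∧ D.ncard ≤ k}) :
      ∃ s : Finset V, ∃ hs, D = ⟨↑s, hs⟩ := by
    obtain ⟨s, hs⟩ := D.1.toFinite.exists_finset_coe
    exact ⟨s, hs ▸ D.2, Subtype.ext hs.symm⟩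
  have hval (s : Finset V) (hsL : s ∈ L) : IsDomSet G ↑s ∧ (↑s : Set V).ncard ≤ k := by
    rw [Set.ncard_coe_finset]; exact (hL s).2 hsL
  set walk := L.pmap (fun (s : Finset V) hs ↦
    (⟨↑s, hs⟩ : {D : Set V // IsDomSet G D ∧ D.ncard ≤ k})) hval
  have hwalk : walk.IsChain (KDomGraph G k).Adj :=
    List.isChain_pmap_of_isChain (fun _ _ _ _ h ↦ (kDomGraph_adj_coe _ _).2 h) hchain hval
  have hmem (D : {D : Set V // IsDomSet G D ∧ D.ncard ≤ k}) : D ∈ walk := by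
    obtain ⟨s, hs, rfl⟩ := hvert D
    exact List.mem_pmap.2 ⟨s, (hL s).1 (by simpa using hs), rfl⟩
  refine ⟨fun D ↦ ?_, fun u _ x _ _ _ ↦ hwalk.reachable (hmem u) (hmem x)⟩
  obtain ⟨s, hs, rfl⟩ := hvert D
  rw [ncard_neighborSet_kDomGraph_coe]
  exact heven s hs.1 (by simpa using hs.2)

end KDomGraph

section Cycle

variable {n : ℕ}

lemma cycleGraph_adj_iff_val (hn : 2 ≤ n) (u v : Fin n) :
    (cycleGraph n).Adj u v ↔ v.val = u.val + 1 ∨ u.val = v.val + 1 ∨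
      (u.val = 0 ∧ v.val = n - 1) ∨ (v.val = 0 ∧ u.val = n - 1) := by
  have hsub (a b : Fin n) :
      (a - b).val = 1 ↔ a.val = b.val + 1 ∨ (b.val = n - 1 ∧ a.val = 0) := by
    rw [show (a - b).val = (n - b.val + a.val) % n from rfl]
    rcases le_or_gt b.val a.val with h | h
    · rw [show n - b.val + a.val = (a.val - b.val) + n by omega, Nat.add_mod_right,
        Nat.mod_eq_of_lt (by omega)]
      omega
    · rw [Nat.mod_eq_of_lt (by omega)]
      omega
  rw [cycleGraph_adj', hsub, hsub]
  omega

lemma isDomSet_cycleGraph_preimage_val (hn : 2 ≤ n) {S : Set ℕ}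
    (h : ∀ v < n, v ∉ S → (v + 1 < n ∧ v + 1 ∈ S) ∨ (v + 1 = n ∧ 0 ∈ S) ∨
      (0 < v ∧ v - 1 ∈ S) ∨ (v = 0 ∧ n - 1 ∈ S)) :
    IsDomSet (cycleGraph n) (Fin.val ⁻¹' S) := by
  intro v hv
  rcases h v v.isLt hv with ⟨hlt, hS⟩ | ⟨heq, hS⟩ | ⟨hpos, hS⟩ | ⟨hzero, hS⟩
  · exact ⟨⟨v + 1, hlt⟩, hS, by rw [cycleGraph_adj_iff_val hn]; simp⟩
  · exact ⟨⟨0, by omega⟩, hS, by rw [cycleGraph_adj_iff_val hn]; simp; omega⟩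
  · exact ⟨⟨v - 1, by omega⟩, hS, by rw [cycleGraph_adj_iff_val hn]; simp; omega⟩
  · exact ⟨⟨n - 1, by omega⟩, hS, by rw [cycleGraph_adj_iff_val hn]; simp; omega⟩

lemma ncard_preimage_val (S : Set ℕ) [DecidablePred (· ∈ S)] :
    (Fin.val ⁻¹' S : Set (Fin n)).ncard = Nat.count (· ∈ S) n := by
  rw [Nat.count_eq_card_filter_range, ← Set.ncard_coe_finset,
    ← Set.ncard_image_of_injective _ Fin.val_injective]
  congr 1
  ext v
  simp only [Set.mem_image, Set.mem_preimage, Finset.coe_filter, Finset.mem_range]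
  exact ⟨fun ⟨w, hw, hwv⟩ ↦ hwv ▸ ⟨w.isLt, hw⟩, fun ⟨hv, hS⟩ ↦ ⟨⟨v, hv⟩, hS, rfl⟩⟩

end Cycle

def twoThreeSet (a : ℕ) : Set ℕ :=
  {v | v < 2 * a ∧ v % 2 = 0 ∨ 2 * a ≤ v ∧ (v - 2 * a) % 3 = 0}

instance (a : ℕ) : DecidablePred (· ∈ twoThreeSet a) :=
  fun _ ↦ inferInstanceAs (Decidable (_ ∨ _))

section TwoThree

variable {n a : ℕ}

lemma count_twoThreeSet (m : ℕ) : Nat.count (· ∈ twoThreeSet a) m =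
    if m ≤ 2 * a then (m + 1) / 2 else a + (m - 2 * a + 2) / 3 := by
  induction m with
  | zero => simp
  | succ m ih =>
    rw [Nat.count_succ, ih]
    by_cases hm : m ∈ twoThreeSet a <;> simp only [hm, if_true, if_false] <;>
      simp only [twoThreeSet, Set.mem_ofPred_eq] at hm <;> split_ifs <;> omega

lemma ncard_twoThreeSet (ha : 2 * a ≤ n) :
    (Fin.val ⁻¹' twoThreeSet a : Set (Fin n)).ncard = a + (n - 2 * a + 2) / 3 := by
  rw [ncard_preimage_val, count_twoThreeSet]
  split_ifs <;> omega

lemma isDomSet_twoThreeSet (hn : 2 ≤ n) (ha : 2 * a ≤ n) :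
    IsDomSet (cycleGraph n) (Fin.val ⁻¹' twoThreeSet a) := by
  refine isDomSet_cycleGraph_preimage_val hn fun v hv hS ↦ ?_
  simp only [twoThreeSet, Set.mem_ofPred_eq, Nat.zero_mod, and_true] at hS ⊢
  rcases Nat.lt_or_ge v (2 * a) with h | h
  · rcases Nat.lt_or_ge (v + 1) n with h2 | h2
    · left; omega
    · right; left; omega
  · rcases (by omega : (v - 2 * a) % 3 = 1 ∨ (v - 2 * a) % 3 = 2) with h3 | h3
    · right; right; left; omega
    · rcases Nat.lt_or_ge (v + 1) n with h2 | h2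
      · left; omega
      · right; left; omega

lemma isIndepSet_twoThreeSet (hn : 2 ≤ n) (ha : 2 * a ≤ n) (hmod : (n - 2 * a) % 3 ≠ 1) :
    (cycleGraph n).IsIndepSet (Fin.val ⁻¹' twoThreeSet a) := by
  intro u hu v hv hne hadj
  rw [cycleGraph_adj_iff_val hn] at hadj
  simp only [twoThreeSet, Set.mem_preimage, Set.mem_ofPred_eq] at hu hv
  have := u.isLt
  have := v.isLt
  omega

lemma removableVertices_insert_twoThreeSet (hn : 2 * a + 6 ≤ n) (hmod : (n - 2 * a) % 3 ≠ 1) :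
    removableVertices (cycleGraph n) (insert ⟨2 * a + 4, by omega⟩ (Fin.val ⁻¹' twoThreeSet a)) =
      {⟨2 * a + 4, by omega⟩} := by
  have hn2 : 2 ≤ n := by omega
  have hy : (⟨2 * a + 4, by omega⟩ : Fin n) ∉ Fin.val ⁻¹' twoThreeSet a := by
    simp only [twoThreeSet, Set.mem_preimage, Set.mem_ofPred_eq]; omega
  ext x
  simp only [removableVertices, Set.mem_ofPred_eq, Set.mem_singleton_iff]
  constructor
  · rintro ⟨hx, hdom⟩
    by_contra hne
    rcases hx with rfl | hx
    · exact hne rfl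
    have hval : x.val ≠ 2 * a + 4 := fun h ↦ hne (Fin.ext h)
    simp only [twoThreeSet, Set.mem_preimage, Set.mem_ofPred_eq] at hx
    by_cases h3 : x.val = 2 * a + 3
    -- `2a + 3` is dominated by `2a + 4`, but it is the only neighbour of `2a + 2` in the set.
    · refine not_isDomSet_diff_singleton (w := ⟨2 * a + 2, by omega⟩) ?_ ?_ hdom
      · simp [twoThreeSet]
      · intro u hu hadj
        rw [cycleGraph_adj_iff_val hn2] at hadj
        simp only [Set.mem_insert_iff, Set.mem_preimage, Set.mem_ofPred_eq, twoThreeSet,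
          Fin.ext_iff] at hu hadj ⊢
        omega
    · refine not_isDomSet_diff_singleton (w := x) (by simp) ?_ hdom
      intro u hu hadj
      rw [cycleGraph_adj_iff_val hn2] at hadj
      simp only [Set.mem_insert_iff, Set.mem_preimage, Set.mem_ofPred_eq, twoThreeSet,
        Fin.ext_iff] at hu hadj ⊢
      have := x.isLt
      have := u.isLt
      omega
  · rintro rfl
    refine ⟨Set.mem_insert _ _, ?_⟩
    rw [Set.insert_sdiff_self_of_notMem hy]
    exact isDomSet_twoThreeSet hn2 (by omega)

end TwoThree

section CycleDomination

variable {n a k : ℕ}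

lemma not_isEulerian_kDomGraph_cycleGraph_of_lt (hn : 2 ≤ n) (ha : 2 * a ≤ n)
    (hmod : (n - 2 * a) % 3 ≠ 1) (hk : a + (n - 2 * a + 2) / 3 < k)
    (hodd : Odd (n - (a + (n - 2 * a + 2) / 3))) :
    ¬ IsEulerian (KDomGraph (cycleGraph n) k) := by
  have hcard := ncard_twoThreeSet (n := n) ha
  refine not_isEulerian_kDomGraph_of_isIndepSet (isDomSet_twoThreeSet hn ha)
    (isIndepSet_twoThreeSet hn ha hmod) (hcard ▸ hk) ?_
  rwa [Nat.card_fin, hcard]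

lemma not_isEulerian_kDomGraph_cycleGraph_of_eq (hn : 2 * a + 6 ≤ n)
    (hmod : (n - 2 * a) % 3 ≠ 1) (hk : k = a + (n - 2 * a + 2) / 3 + 1) :
    ¬ IsEulerian (KDomGraph (cycleGraph n) k) := by
  have hy : (⟨2 * a + 4, by omega⟩ : Fin n) ∉ Fin.val ⁻¹' twoThreeSet a := by
    simp only [twoThreeSet, Set.mem_preimage, Set.mem_ofPred_eq]; omega
  refine not_isEulerian_kDomGraph_of_removableVertices_eq_singleton
    ((isDomSet_twoThreeSet (by omega) (by omega)).mono (Set.subset_insert _ _)) ?_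
    (removableVertices_insert_twoThreeSet hn hmod)
  rw [Set.ncard_insert_of_notMem hy, ncard_twoThreeSet (by omega), hk]

lemma not_isEulerian_kDomGraph_cycleGraph (hn : 5 ≤ n) (h7 : n ≠ 7) (hk : (n + 2) / 3 < k) :
    ¬ IsEulerian (KDomGraph (cycleGraph n) k) := by
  obtain h | h | h : n % 3 = 2 ∨ n % 3 = 0 ∨ n % 3 = 1 := by omega
  · exact not_isEulerian_kDomGraph_cycleGraph_of_lt (a := 1) (by omega) (by omega) (by omega)
      (by omega) (by rw [Nat.odd_iff]; omega)
  · rcases Nat.lt_or_ge (n / 3 + 1) k with hk' | hk'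
    · exact not_isEulerian_kDomGraph_cycleGraph_of_lt (a := 3) (by omega) (by omega) (by omega)
        (by omega) (by rw [Nat.odd_iff]; omega)
    · exact not_isEulerian_kDomGraph_cycleGraph_of_eq (a := 0) (by omega) (by omega) (by omega)
  · rcases Nat.lt_or_ge (n / 3 + 2) k with hk' | hk'
    · exact not_isEulerian_kDomGraph_cycleGraph_of_lt (a := 4) (by omega) (by omega) (by omega)
        (by omega) (by rw [Nat.odd_iff]; omega)
    · exact not_isEulerian_kDomGraph_cycleGraph_of_eq (a := 2) (by omega) (by omega) (by omega)

end CycleDomination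

lemma isEulerian_kDomGraph_cycleGraph_three : IsEulerian (KDomGraph (cycleGraph 3) 2) :=
  isEulerian_kDomGraph_of_isChain (by decide) [{0}, {0, 1}, {1}, {1, 2}, {2}, {0, 2}]
    (by decide) (by decide)

set_option maxRecDepth 10000 in
lemma isEulerian_kDomGraph_cycleGraph_seven : IsEulerian (KDomGraph (cycleGraph 7) 4) :=
  isEulerian_kDomGraph_of_isChain (by decide)
    [{2,4,5,6}, {2,5,6}, {2,3,5,6}, {2,3,6}, {1,2,3,6}, {1,3,6}, {0,1,3,6}, {0,3,6}, {0,2,3,6},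
     {0,3,6}, {0,3,4,6}, {0,3,4}, {0,2,3,4}, {0,2,4}, {0,1,2,4}, {0,1,4}, {0,1,4,6}, {1,4,6},
     {1,3,4,6}, {1,3,6}, {1,3,5,6}, {1,3,5}, {0,1,3,5}, {0,3,5}, {0,2,3,5}, {0,2,5}, {0,1,2,5},
     {1,2,5}, {1,2,5,6}, {2,5,6}, {0,2,5,6}, {0,2,5}, {0,2,4,5}, {0,2,4}, {0,2,4,6}, {2,4,6},
     {2,3,4,6}, {2,4,6}, {1,2,4,6}, {1,4,6}, {1,4,5,6}, {1,4,5}, {1,2,4,5}, {1,2,5}, {1,2,3,5},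
     {1,3,5}, {1,3,4,5}, {1,4,5}, {0,1,4,5}, {0,1,4}, {0,1,3,4}, {0,3,4}, {0,3,4,5}, {0,3,5},
     {0,3,5,6}]
    (by decide) (by decide)

lemma not_isEulerian_kDomGraph_cycleGraph_four : ¬ IsEulerian (KDomGraph (cycleGraph 4) 3) :=
  not_isEulerian_kDomGraph_of_odd {0, 1, 2} (by decide) (by decide) (by decide)

-- `{2, …, 6}` has three removable vertices, and two addable ones when `k = 6`.
lemma not_isEulerian_kDomGraph_cycleGraph_seven {k : ℕ} (hk : k = 5 ∨ k = 6) :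
    ¬ IsEulerian (KDomGraph (cycleGraph 7) k) := by
  rcases hk with rfl | rfl <;>
    exact not_isEulerian_kDomGraph_of_odd {2, 3, 4, 5, 6} (by decide) (by decide) (by decide)

theorem kDomGraph_cycle_eulerian_iff_general (n k : ℕ)
    (hk1 : (n + 2) / 3 < k) (hk2 : k < n) :
    IsEulerian (KDomGraph (SimpleGraph.cycleGraph n) k) ↔
      (n = 7 ∧ k = 4) ∨ (n = 3 ∧ k = 2) := by
  obtain rfl | rfl | rfl | hn : n = 3 ∨ n = 4 ∨ n = 7 ∨ 5 ≤ n ∧ n ≠ 7 := by omega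
  · obtain rfl : k = 2 := by omega
    simpa using isEulerian_kDomGraph_cycleGraph_three
  · obtain rfl : k = 3 := by omega
    exact iff_of_false not_isEulerian_kDomGraph_cycleGraph_four (by omega)
  · obtain rfl | hk : k = 4 ∨ k = 5 ∨ k = 6 := by omega
    · simpa using isEulerian_kDomGraph_cycleGraph_seven
    · exact iff_of_false (not_isEulerian_kDomGraph_cycleGraph_seven hk) (by omega)
  · exact iff_of_false (not_isEulerian_kDomGraph_cycleGraph hn.1 hn.2 hk1) (by omega)

/-- For `n ≥ 3` and `⌈n/3⌉ < k < n`, the `k`-dominating graph of the cycle `C_n` is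
Eulerian iff `n = 7` and `k = 4`, or `n = 3` and `k = 2`. -/
theorem kDomGraph_cycle_eulerian_iff (n k : ℕ) (hn : 3 ≤ n)
    (hk1 : (n + 2) / 3 < k) (hk2 : k < n) :
    IsEulerian (KDomGraph (SimpleGraph.cycleGraph n) k) ↔
      (n = 7 ∧ k = 4) ∨ (n = 3 ∧ k = 2) :=
  kDomGraph_cycle_eulerian_iff_general n k hk1 hk2
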